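/- arXiv:2208.10355 — 5 statements merged into one kernel-verified Lean document; each statement's English description precedes it below -/
import Mathlib

section
/- For every Schwartz function f on ℝⁿ, every x ∈ ℝⁿ, and each choice of sign ±, there exists an entire function G : ℂ → ℂ such that G(α) = (P_±^α f)(x) for every α with Re α > 0, and G(0) = (Pf)(x), the parabolic Radon transform of f at x. -/
open MeasureTheory Complex

noncomputable section

/-- ℝⁿ realized as ℝ^{n-1} × ℝ, points written x = (x', xₙ). -/
abbrev Rn (n : ℕ) : Type := EuclideanSpace ℝ (Fin (n - 1)) × ℝ

/-- (t)₊^λ = exp(λ log t) for t > 0 (σ = true), (t)₋^λ = exp(λ log(−t)) for t < 0 (σ = false). -/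
def ppow (σ : Bool) (t : ℝ) (l : ℂ) : ℂ :=
  if σ then (if 0 < t then Complex.exp (l * Real.log t) else 0)
  else (if t < 0 then Complex.exp (l * Real.log (-t)) else 0)

/-- The parabolic fractional integral P_±^α f. -/
def parP (n : ℕ) (σ : Bool) (α : ℂ) (f : Rn n → ℂ) (x : Rn n) : ℂ :=
  (1 / Complex.Gamma α) * ∫ y : Rn n, ppow σ (y.2 - ‖y.1‖ ^ 2) (α - 1) * f (x - y)

/-- The parabolic Radon transform P f. -/
def parRadon (n : ℕ) (f : Rn n → ℂ) (x : Rn n) : ℂ :=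
  ∫ y' : EuclideanSpace ℝ (Fin (n - 1)), f (x.1 - y', x.2 - ‖y'‖ ^ 2)

open Set Filter Topology Asymptotics Module LineDeriv

/-!
Substituting `y = (y', |y'|² + ε t)` (with `ε = ±1` the sign of `P_±`) and integrating out `y'`
turns `(P_±^α f)(x)` into `Γ(α)⁻¹ 𝓜g(α)`, the Mellin transform of
`g(t) = (Pf)(x', x_n - ε t)`. The function `g` and all its derivatives, which are the same
fibre integrals of vertical derivatives of `f`, decay rapidly as `t → +∞`. For such `g`,
integration by parts gives `Γ(s)⁻¹ 𝓜g(s) = (-1)ᵏ Γ(s+k)⁻¹ 𝓜(g⁽ᵏ⁾)(s+k)`, and the right-hand side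
is holomorphic on `Re s > -k`. These continuations patch together to an entire function, whose
value at `0` (take `k = 1`) is `-∫₀^∞ g' = g(0) = (Pf)(x)`.
-/

section Mellin

variable {φ ψ : ℝ → ℂ}

lemma isBigO_inv_one_add_pow_rpow_neg {a : ℝ} {m : ℕ} (ha : a ≤ m) :
    (fun t : ℝ => ((1 + t) ^ m)⁻¹) =O[atTop] (· ^ (-a)) := by
  refine IsBigO.of_bound 1 ?_
  filter_upwards [eventually_ge_atTop 1] with t ht
  have ht0 : 0 < t := by linarith
  rw [one_mul, norm_inv, Real.norm_of_nonneg (by positivity),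
    Real.norm_of_nonneg (by positivity), Real.rpow_neg ht0.le]
  gcongr
  calc t ^ a ≤ t ^ (m : ℝ) := Real.rpow_le_rpow_of_exponent_le ht ha
    _ = t ^ m := Real.rpow_natCast t m
    _ ≤ (1 + t) ^ m := by gcongr; linarith

lemma ContinuousAt.isBigO_nhdsGT_zero_rpow_neg_zero {F : Type*} [NormedAddCommGroup F]
    {f : ℝ → F} (hf : ContinuousAt f 0) : f =O[𝓝[>] 0] (· ^ (-(0 : ℝ))) := by
  simpa only [neg_zero, Real.rpow_zero] using
    (hf.tendsto.mono_left nhdsWithin_le_nhds).isBigO_one ℝ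

lemma mellinConvergent_of_rapidDecay (hφc : Continuous φ)
    (hφ : ∀ a : ℝ, φ =O[atTop] (· ^ (-a))) {s : ℂ} (hs : 0 < s.re) : MellinConvergent φ s :=
  mellinConvergent_of_isBigO_rpow (hφc.locallyIntegrable.locallyIntegrableOn _)
    (hφ (s.re + 1)) (by linarith) hφc.continuousAt.isBigO_nhdsGT_zero_rpow_neg_zero hs

lemma differentiableAt_mellin_of_rapidDecay (hφc : Continuous φ)
    (hφ : ∀ a : ℝ, φ =O[atTop] (· ^ (-a))) {s : ℂ} (hs : 0 < s.re) :
    DifferentiableAt ℂ (mellin φ) s :=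
  mellin_differentiableAt_of_isBigO_rpow (hφc.locallyIntegrable.locallyIntegrableOn _)
    (hφ (s.re + 1)) (by linarith) hφc.continuousAt.isBigO_nhdsGT_zero_rpow_neg_zero hs

lemma tendsto_cpow_mul_nhdsGT_zero (hφc : Continuous φ) {s : ℂ} (hs : 0 < s.re) :
    Tendsto (fun t : ℝ => (t : ℂ) ^ s * φ t) (𝓝[>] 0) (𝓝 0) := by
  have h := ((continuousAt_ofReal_cpow_const 0 s (Or.inl hs)).mul hφc.continuousAt).tendsto
  rw [Pi.mul_apply, ofReal_zero, zero_cpow (ne_zero_of_re_pos hs), zero_mul] at h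
  exact h.mono_left nhdsWithin_le_nhds

lemma tendsto_cpow_mul_atTop (hφ : ∀ a : ℝ, φ =O[atTop] (· ^ (-a))) (s : ℂ) :
    Tendsto (fun t : ℝ => (t : ℂ) ^ s * φ t) atTop (𝓝 0) := by
  have hpow : (fun t : ℝ => (t : ℂ) ^ s) =O[atTop] (· ^ s.re) := by
    refine IsBigO.of_bound 1 ?_
    filter_upwards [eventually_gt_atTop 0] with t ht
    rw [one_mul, norm_cpow_eq_rpow_re_of_pos ht, Real.norm_of_nonneg (by positivity)]
  refine (hpow.mul (hφ (s.re + 1))).trans_tendsto ?_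
  refine (tendsto_rpow_neg_atTop zero_lt_one).congr' ?_
  filter_upwards [eventually_gt_atTop 0] with t ht
  rw [← Real.rpow_add ht]
  ring_nf

lemma mul_mellin_eq_neg_mellin_deriv (hd : ∀ t, HasDerivAt φ (ψ t) t) (hφc : Continuous φ)
    (hψc : Continuous ψ) (hφ : ∀ a : ℝ, φ =O[atTop] (· ^ (-a)))
    (hψ : ∀ a : ℝ, ψ =O[atTop] (· ^ (-a))) {s : ℂ} (hs : 0 < s.re) :
    s * mellin φ s = -mellin ψ (s + 1) := by
  have hψs : MellinConvergent ψ (s + 1) :=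
    mellinConvergent_of_rapidDecay hψc hψ (by rw [add_re, one_re]; linarith)
  have hφs : MellinConvergent φ s := mellinConvergent_of_rapidDecay hφc hφ hs
  have ibp := integral_Ioi_mul_deriv_eq_deriv_mul (a := 0) (u := fun t : ℝ => (t : ℂ) ^ s)
    (u' := fun t : ℝ => s * (t : ℂ) ^ (s - 1)) (v := φ) (v' := ψ)
    (fun t ht => hasDerivAt_ofReal_cpow_const (ne_of_gt ht) (ne_zero_of_re_pos hs))
    (fun t _ => hd t)
    (by simpa [MellinConvergent, Pi.mul_def] using hψs)
    (by simpa [MellinConvergent, Pi.mul_def, mul_assoc, mul_left_comm] using hφs.const_smul s)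
    (tendsto_cpow_mul_nhdsGT_zero hφc hs) (tendsto_cpow_mul_atTop hφ s)
  simp only [sub_zero, zero_sub, mul_assoc, integral_const_mul] at ibp
  simp only [mellin, add_sub_cancel_right, smul_eq_mul]
  rw [ibp, neg_neg]

end Mellin

section Continuation

variable {φ : ℕ → ℝ → ℂ}

def mellinGammaShift (φ : ℕ → ℝ → ℂ) (k : ℕ) (s : ℂ) : ℂ :=
  (-1) ^ k * (Gamma (s + k))⁻¹ * mellin (φ k) (s + k)

def mellinGammaExtension (φ : ℕ → ℝ → ℂ) (s : ℂ) : ℂ :=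
  mellinGammaShift φ (⌊-s.re⌋₊ + 1) s

lemma neg_floor_add_one_lt_re (s : ℂ) : -((⌊-s.re⌋₊ + 1 : ℕ) : ℝ) < s.re := by
  have := Nat.lt_floor_add_one (-s.re)
  push_cast
  linarith

variable (hd : ∀ k t, HasDerivAt (φ k) (φ (k + 1) t) t)
  (hdec : ∀ k (a : ℝ), φ k =O[atTop] (· ^ (-a)))
include hd hdec

lemma mellinGammaShift_succ {k : ℕ} {s : ℂ} (hs : 0 < (s + k).re) :
    mellinGammaShift φ k s = mellinGammaShift φ (k + 1) s := by
  have hcont (j : ℕ) : Continuous (φ j) :=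
    continuous_iff_continuousAt.2 fun t => (hd j t).continuousAt
  have ibp := mul_mellin_eq_neg_mellin_deriv (hd k) (hcont k) (hcont (k + 1)) (hdec k)
    (hdec (k + 1)) hs
  have hs0 := ne_zero_of_re_pos hs
  have hΓ := Gamma_ne_zero_of_re_pos hs
  simp only [mellinGammaShift, Nat.cast_succ, ← add_assoc, Gamma_add_one _ hs0, pow_succ]
  field_simp
  exact ibp

lemma mellinGammaShift_eq_of_le {k j : ℕ} (hkj : k ≤ j) {s : ℂ} (hs : -(k : ℝ) < s.re) :
    mellinGammaShift φ k s = mellinGammaShift φ j s := by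
  induction j, hkj using Nat.le_induction with
  | base => rfl
  | succ j hkj ih =>
    refine ih.trans (mellinGammaShift_succ hd hdec ?_)
    have : (k : ℝ) ≤ j := by exact_mod_cast hkj
    rw [add_re, natCast_re]
    linarith

lemma mellinGammaShift_eq {k j : ℕ} {s : ℂ} (hk : -(k : ℝ) < s.re) (hj : -(j : ℝ) < s.re) :
    mellinGammaShift φ k s = mellinGammaShift φ j s := by
  rcases le_total k j with h | h
  · exact mellinGammaShift_eq_of_le hd hdec h hk
  · exact (mellinGammaShift_eq_of_le hd hdec h hj).symm

lemma mellinGammaExtension_eq {k : ℕ} {s : ℂ} (hk : -(k : ℝ) < s.re) :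
    mellinGammaExtension φ s = mellinGammaShift φ k s :=
  mellinGammaShift_eq hd hdec (neg_floor_add_one_lt_re s) hk

lemma differentiableAt_mellinGammaShift {k : ℕ} {s : ℂ} (hk : -(k : ℝ) < s.re) :
    DifferentiableAt ℂ (mellinGammaShift φ k) s := by
  have hre : 0 < (s + k).re := by rw [add_re, natCast_re]; linarith
  have hcont : Continuous (φ k) :=
    continuous_iff_continuousAt.2 fun t => (hd k t).continuousAt
  have hshift : DifferentiableAt ℂ (fun β : ℂ => β + k) s := differentiableAt_id.add_const _
  have hΓ : DifferentiableAt ℂ (fun β : ℂ => (Gamma (β + k))⁻¹) s :=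
    differentiable_one_div_Gamma.differentiableAt.comp s hshift
  have hM : DifferentiableAt ℂ (fun β : ℂ => mellin (φ k) (β + k)) s :=
    (differentiableAt_mellin_of_rapidDecay hcont (hdec k) hre).comp (g := mellin (φ k)) s hshift
  exact ((differentiableAt_const _).mul hΓ).mul hM

theorem differentiable_mellinGammaExtension : Differentiable ℂ (mellinGammaExtension φ) := by
  intro s
  have hK := neg_floor_add_one_lt_re s
  have hEq : mellinGammaExtension φ =ᶠ[𝓝 s] mellinGammaShift φ (⌊-s.re⌋₊ + 1) :=
    eventually_of_mem ((isOpen_lt continuous_const continuous_re).mem_nhds hK)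
      fun β hβ => mellinGammaExtension_eq hd hdec hβ
  exact (differentiableAt_mellinGammaShift hd hdec hK).congr_of_eventuallyEq hEq

lemma mellinGammaExtension_of_re_pos {s : ℂ} (hs : 0 < s.re) :
    mellinGammaExtension φ s = (Gamma s)⁻¹ * mellin (φ 0) s := by
  rw [mellinGammaExtension_eq hd hdec (k := 0) (by simpa using hs)]
  simp [mellinGammaShift]

lemma mellinGammaExtension_zero : mellinGammaExtension φ 0 = φ 0 0 := by
  have hcont : Continuous (φ 1) :=
    continuous_iff_continuousAt.2 fun t => (hd 1 t).continuousAt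
  have hint : IntegrableOn (φ 1) (Ioi 0) := by
    simpa [MellinConvergent] using mellinConvergent_of_rapidDecay hcont (hdec 1) (s := 1) (by simp)
  have hlim : Tendsto (φ 0) atTop (𝓝 0) := by simpa using tendsto_cpow_mul_atTop (hdec 0) 0
  have ftc := integral_Ioi_of_hasDerivAt_of_tendsto' (fun t _ => hd 0 t) hint hlim
  rw [mellinGammaExtension_eq hd hdec (k := 1) (by simp)]
  simp [mellinGammaShift, mellin, ftc]

end Continuation

section Parabola

variable {E F : Type*} [NormedAddCommGroup E]

lemma one_add_le_parabola_weight (x y : E) (c ε t : ℝ) (hε : |ε| = 1) (ht : 0 ≤ t) :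
    1 + t ≤ (1 + |c|) * (1 + ‖x‖) ^ 2 * (1 + ‖x - y‖) ^ 2 * (1 + |c - ε * t - ‖y‖ ^ 2|) := by
  set s := c - ε * t - ‖y‖ ^ 2
  have hy : 1 + ‖y‖ ^ 2 ≤ (1 + ‖x‖) ^ 2 * (1 + ‖x - y‖) ^ 2 := by
    have h1 : ‖y‖ ≤ ‖x‖ + ‖x - y‖ := by
      simpa [norm_sub_rev] using norm_le_norm_add_norm_sub' y x
    have h2 : 1 + ‖y‖ ≤ (1 + ‖x‖) * (1 + ‖x - y‖) := by
      nlinarith [mul_nonneg (norm_nonneg x) (norm_nonneg (x - y))]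
    nlinarith [norm_nonneg y]
  have hts : t ≤ |c| + ‖y‖ ^ 2 + |s| := by
    have ht' : t = |c - ‖y‖ ^ 2 - s| := by
      rw [show c - ‖y‖ ^ 2 - s = ε * t by ring, abs_mul, hε, one_mul, abs_of_nonneg ht]
    have h1 := abs_sub (c - ‖y‖ ^ 2) s
    have h2 := abs_sub c (‖y‖ ^ 2)
    rw [abs_of_nonneg (sq_nonneg ‖y‖)] at h2
    linarith
  calc 1 + t ≤ (1 + |c|) * (1 + ‖y‖ ^ 2) * (1 + |s|) := by
        nlinarith [abs_nonneg c, abs_nonneg s, sq_nonneg ‖y‖,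
          mul_nonneg (mul_nonneg (abs_nonneg c) (sq_nonneg ‖y‖)) (abs_nonneg s)]
    _ ≤ (1 + |c|) * ((1 + ‖x‖) ^ 2 * (1 + ‖x - y‖) ^ 2) * (1 + |s|) := by gcongr
    _ = _ := by ring

variable [NormedSpace ℝ E] [NormedAddCommGroup F] [NormedSpace ℝ F]

lemma SchwartzMap.exists_one_add_pow_mul_le (u : SchwartzMap (E × ℝ) F) (k m : ℕ) :
    ∃ C, ∀ w s, (1 + ‖w‖) ^ k * (1 + |s|) ^ m * ‖u (w, s)‖ ≤ C := by
  refine ⟨2 ^ (k + m) * (Finset.Iic (k + m, 0)).sup (fun m => SchwartzMap.seminorm ℝ m.1 m.2) u,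
    fun w s => ?_⟩
  have h := SchwartzMap.one_add_le_sup_seminorm_apply (𝕜 := ℝ) (m := (k + m, 0)) le_rfl le_rfl
    u (w, s)
  rw [norm_iteratedFDeriv_zero] at h
  refine le_trans ?_ h
  have hw : ‖w‖ ≤ ‖(w, s)‖ := norm_fst_le (w, s)
  have hs : |s| ≤ ‖(w, s)‖ := norm_snd_le (w, s)
  rw [pow_add]
  gcongr

lemma SchwartzMap.exists_norm_le_inv_one_add_norm_pow (u : SchwartzMap (E × ℝ) F) (N : ℕ) :
    ∃ C, ∀ w s, ‖u (w, s)‖ ≤ C * ((1 + ‖w‖) ^ N)⁻¹ := by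
  obtain ⟨C, hC⟩ := u.exists_one_add_pow_mul_le N 0
  refine ⟨C, fun w s => ?_⟩
  rw [← div_eq_mul_inv, le_div_iff₀ (by positivity), mul_comm]
  simpa using hC w s

lemma SchwartzMap.exists_parabola_decay_bound (u : SchwartzMap (E × ℝ) F) (x : E) (c : ℝ)
    {ε : ℝ} (hε : |ε| = 1) (N m : ℕ) :
    ∃ A, ∀ t, 0 ≤ t → ∀ y, ‖u (x - y, c - ε * t - ‖y‖ ^ 2)‖ ≤
      A * ((1 + t) ^ m)⁻¹ * ((1 + ‖x - y‖) ^ N)⁻¹ := by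
  obtain ⟨C, hC⟩ := u.exists_one_add_pow_mul_le (2 * m + N) m
  refine ⟨((1 + |c|) * (1 + ‖x‖) ^ 2) ^ m * C, fun t ht y => ?_⟩
  have hweight := pow_le_pow_left₀ (by positivity) (one_add_le_parabola_weight x y c ε t hε ht) m
  set w := x - y
  set s := c - ε * t - ‖y‖ ^ 2
  rw [mul_assoc, ← mul_inv, ← div_eq_mul_inv, le_div_iff₀ (by positivity)]
  calc ‖u (w, s)‖ * ((1 + t) ^ m * (1 + ‖w‖) ^ N)
      ≤ ‖u (w, s)‖ * (((1 + |c|) * (1 + ‖x‖) ^ 2 * (1 + ‖w‖) ^ 2 * (1 + |s|)) ^ m *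
          (1 + ‖w‖) ^ N) := by gcongr
    _ = ((1 + |c|) * (1 + ‖x‖) ^ 2) ^ m *
          ((1 + ‖w‖) ^ (2 * m + N) * (1 + |s|) ^ m * ‖u (w, s)‖) := by
        simp only [mul_pow, ← pow_mul, pow_add]
        ring
    _ ≤ ((1 + |c|) * (1 + ‖x‖) ^ 2) ^ m * C := by gcongr; exact hC w s

variable [MeasureSpace E] [BorelSpace E] [FiniteDimensional ℝ E]
  [(volume : Measure E).IsAddHaarMeasure]

lemma integrable_inv_one_add_norm_sub_pow (x : E) {N : ℕ} (hN : finrank ℝ E < N) :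
    Integrable (fun y : E => ((1 + ‖x - y‖) ^ N)⁻¹) := by
  have h := (integrable_one_add_norm (μ := volume) (r := N) (by exact_mod_cast hN)).comp_sub_left x
  refine h.congr (Eventually.of_forall fun y => ?_)
  simp only [Real.rpow_neg (by positivity : (0 : ℝ) ≤ 1 + ‖x - y‖), Real.rpow_natCast]

def parabolaIntegral (u : E × ℝ → ℂ) (x : E × ℝ) : ℂ :=
  ∫ y, u (x.1 - y, x.2 - ‖y‖ ^ 2)

lemma integrable_parabola_section (u : SchwartzMap (E × ℝ) F) (x : E) (s : ℝ) :
    Integrable (fun y : E => u (x - y, s - ‖y‖ ^ 2)) := by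
  obtain ⟨C, hC⟩ := u.exists_norm_le_inv_one_add_norm_pow (finrank ℝ E + 1)
  exact ((integrable_inv_one_add_norm_sub_pow x (lt_add_one _)).const_mul C).mono'
    (u.continuous.comp (by fun_prop)).aestronglyMeasurable
    (Eventually.of_forall fun y => hC _ _)

lemma hasDerivAt_parabolaIntegral (u : SchwartzMap (E × ℝ) ℂ) (x : E) (c ε t : ℝ) :
    HasDerivAt (fun t => parabolaIntegral u (x, c - ε * t))
      (parabolaIntegral ⇑(∂_{((0 : E), -ε)} u : SchwartzMap (E × ℝ) ℂ) (x, c - ε * t)) t := by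
  set v : E × ℝ := ((0 : E), -ε)
  set γ : E → ℝ → E × ℝ := fun y t => (x - y, c - ε * t - ‖y‖ ^ 2)
  have hγ (y : E) (t : ℝ) : HasDerivAt (γ y) v t :=
    (hasDerivAt_const t (x - y)).prodMk
      (by simpa using (((hasDerivAt_id t).const_mul ε).const_sub c).sub_const (‖y‖ ^ 2))
  obtain ⟨C, hC⟩ := (∂_{v} u).exists_norm_le_inv_one_add_norm_pow (finrank ℝ E + 1)
  exact (hasDerivAt_integral_of_dominated_loc_of_deriv_le (F' := fun t y => ∂_{v} u (γ y t))
    univ_mem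
    (Eventually.of_forall fun t => (integrable_parabola_section u x _).aestronglyMeasurable)
    (integrable_parabola_section u x _) (integrable_parabola_section _ x _).aestronglyMeasurable
    (Eventually.of_forall fun y t _ => hC _ _)
    ((integrable_inv_one_add_norm_sub_pow x (lt_add_one _)).const_mul C)
    (Eventually.of_forall fun y t _ => (u.hasFDerivAt _).comp_hasDerivAt t (hγ y t))).2

lemma isBigO_parabolaIntegral (u : SchwartzMap (E × ℝ) ℂ) (x : E) (c : ℝ) {ε : ℝ}
    (hε : |ε| = 1) (a : ℝ) :
    (fun t => parabolaIntegral u (x, c - ε * t)) =O[atTop] (· ^ (-a)) := by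
  obtain ⟨A, hA⟩ := u.exists_parabola_decay_bound x c hε (finrank ℝ E + 1) ⌈a⌉₊
  have hint := integrable_inv_one_add_norm_sub_pow x (lt_add_one (finrank ℝ E))
  refine (IsBigO.of_bound (A * ∫ y, ((1 + ‖x - y‖) ^ (finrank ℝ E + 1))⁻¹) ?_).trans
    (isBigO_inv_one_add_pow_rpow_neg (Nat.le_ceil a))
  filter_upwards [eventually_ge_atTop 0] with t ht
  calc ‖parabolaIntegral u (x, c - ε * t)‖
      ≤ ∫ y, A * ((1 + t) ^ ⌈a⌉₊)⁻¹ * ((1 + ‖x - y‖) ^ (finrank ℝ E + 1))⁻¹ :=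
        norm_integral_le_of_norm_le (hint.const_mul _) (Eventually.of_forall (hA t ht))
    _ = A * (∫ y, ((1 + ‖x - y‖) ^ (finrank ℝ E + 1))⁻¹) * ‖((1 + t) ^ ⌈a⌉₊)⁻¹‖ := by
        rw [integral_const_mul, Real.norm_of_nonneg (by positivity)]
        ring

lemma integrable_indicator_cpow_mul_parabola (u : SchwartzMap (E × ℝ) ℂ) (x : E) (c : ℝ)
    {ε : ℝ} (hε : |ε| = 1) {α : ℂ} (hα : 0 < α.re) :
    Integrable (fun p : E × ℝ => (Ioi 0).indicator (fun t : ℝ => (t : ℂ) ^ (α - 1)) p.2 *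
      u (x - p.1, c - ε * p.2 - ‖p.1‖ ^ 2)) (volume.prod volume) := by
  set m := ⌈α.re⌉₊ + 1
  obtain ⟨A, hA⟩ := u.exists_parabola_decay_bound x c hε (finrank ℝ E + 1) m
  set h : ℝ → ℝ := fun t => A * ((1 + t) ^ m)⁻¹
  have hm : α.re < m := by push_cast [m]; linarith [Nat.le_ceil α.re]
  have hcont (t : ℝ) (ht : 0 ≤ t) : ContinuousAt h t := by
    have : (1 + t) ^ m ≠ 0 := by positivity
    fun_prop (disch := exact this)
  have hh : IntegrableOn (fun t : ℝ => t ^ (α.re - 1) * h t) (Ioi 0) :=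
    mellin_convergent_of_isBigO_scalar
      ((continuousOn_of_forall_continuousAt fun t ht => hcont t (le_of_lt ht)).locallyIntegrableOn
        measurableSet_Ioi)
      ((isBigO_inv_one_add_pow_rpow_neg le_rfl).const_mul_left A) hm
      (hcont 0 le_rfl).isBigO_nhdsGT_zero_rpow_neg_zero hα
  refine ((integrable_inv_one_add_norm_sub_pow x (lt_add_one (finrank ℝ E))).mul_prod
    ((integrable_indicator_iff measurableSet_Ioi).2 hh)).mono' ?_ ?_
  · exact ((by fun_prop : Measurable fun t : ℝ => (t : ℂ) ^ (α - 1)).indicator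
      measurableSet_Ioi).comp measurable_snd |>.aestronglyMeasurable.mul
      (u.continuous.comp (by fun_prop)).aestronglyMeasurable
  · refine Eventually.of_forall fun ⟨y, t⟩ => ?_
    by_cases ht : 0 < t
    · simp only [indicator_of_mem (show t ∈ Ioi 0 from ht), norm_mul,
        norm_cpow_eq_rpow_re_of_pos ht, sub_re, one_re]
      calc t ^ (α.re - 1) * ‖u (x - y, c - ε * t - ‖y‖ ^ 2)‖
          ≤ t ^ (α.re - 1) * (A * ((1 + t) ^ m)⁻¹ * ((1 + ‖x - y‖) ^ (finrank ℝ E + 1))⁻¹) := by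
            gcongr
            exact hA t ht.le y
        _ = _ := by ring
    · simp [indicator_of_notMem (show t ∉ Ioi 0 from ht)]

def ppowSign (σ : Bool) : ℝ := if σ then 1 else -1

lemma abs_ppowSign (σ : Bool) : |ppowSign σ| = 1 := by cases σ <;> simp [ppowSign]

lemma ppow_ppowSign_mul (σ : Bool) (t : ℝ) (l : ℂ) :
    ppow σ (ppowSign σ * t) l = (Ioi 0).indicator (fun t : ℝ => (t : ℂ) ^ l) t := by
  by_cases ht : 0 < t
  · rw [indicator_of_mem (show t ∈ Ioi 0 from ht), cpow_def_of_ne_zero (ofReal_ne_zero.2 ht.ne'),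
      ← ofReal_log ht.le]
    cases σ <;> simp [ppow, ppowSign, ht, mul_comm]
  · rw [indicator_of_notMem (show t ∉ Ioi 0 from ht)]
    cases σ <;> simp [ppow, ppowSign, ht]

def parabolicShear {ε : ℝ} (hε : |ε| = 1) : E × ℝ ≃ᵐ E × ℝ where
  toFun p := (p.1, ‖p.1‖ ^ 2 + ε * p.2)
  invFun p := (p.1, ε * (p.2 - ‖p.1‖ ^ 2))
  left_inv p := by
    have : ε * ε = 1 := by rw [← abs_mul_abs_self, hε, one_mul]
    ext <;> simp only; linear_combination p.2 * this
  right_inv p := by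
    have : ε * ε = 1 := by rw [← abs_mul_abs_self, hε, one_mul]
    ext <;> simp only; linear_combination (p.2 - ‖p.1‖ ^ 2) * this
  measurable_toFun := by
    change Measurable fun p : E × ℝ => (p.1, ‖p.1‖ ^ 2 + ε * p.2)
    fun_prop
  measurable_invFun := by
    change Measurable fun p : E × ℝ => (p.1, ε * (p.2 - ‖p.1‖ ^ 2))
    fun_prop

lemma measurePreserving_parabolicShear {ε : ℝ} (hε : |ε| = 1) :
    MeasurePreserving (parabolicShear (E := E) hε) (volume.prod volume) (volume.prod volume) := by
  have hscale : MeasurePreserving (ε * ·) (volume : Measure ℝ) volume :=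
    ⟨measurable_const_mul ε, by
      rw [Real.map_volume_mul_left (by rintro rfl; simp at hε), abs_inv, hε, inv_one,
        ENNReal.ofReal_one, one_smul]⟩
  exact (MeasurePreserving.id volume).skew_product (g := fun y t => ‖y‖ ^ 2 + ε * t)
    (by fun_prop) (Eventually.of_forall fun y =>
      ((measurePreserving_add_left volume (‖y‖ ^ 2)).comp hscale).map_eq)

lemma integral_ppow_mul_eq_mellin (σ : Bool) (u : SchwartzMap (E × ℝ) ℂ) (x : E × ℝ) {α : ℂ}
    (hα : 0 < α.re) :
    ∫ y, ppow σ (y.2 - ‖y.1‖ ^ 2) (α - 1) * u (x - y) =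
      mellin (fun t => parabolaIntegral u (x.1, x.2 - ppowSign σ * t)) α := by
  set ε := ppowSign σ
  have hε : |ε| = 1 := abs_ppowSign σ
  set χ := (Ioi (0 : ℝ)).indicator (fun t : ℝ => (t : ℂ) ^ (α - 1))
  have hshear (p : E × ℝ) :
      ppow σ ((parabolicShear hε p).2 - ‖(parabolicShear hε p).1‖ ^ 2) (α - 1) *
        u (x - parabolicShear hε p) = χ p.2 * u (x.1 - p.1, x.2 - ε * p.2 - ‖p.1‖ ^ 2) := by
    change ppow σ (‖p.1‖ ^ 2 + ε * p.2 - ‖p.1‖ ^ 2) (α - 1) *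
      u (x.1 - p.1, x.2 - (‖p.1‖ ^ 2 + ε * p.2)) = _
    rw [add_sub_cancel_left, ppow_ppowSign_mul, sub_add_eq_sub_sub_swap]
  have hfibre (t : ℝ) : ∫ y, χ t * u (x.1 - y, x.2 - ε * t - ‖y‖ ^ 2) = (Ioi 0).indicator
      (fun t : ℝ => (t : ℂ) ^ (α - 1) • parabolaIntegral u (x.1, x.2 - ε * t)) t := by
    rw [integral_const_mul]
    by_cases ht : t ∈ Ioi 0 <;> simp [χ, ht, parabolaIntegral]
  calc ∫ y, ppow σ (y.2 - ‖y.1‖ ^ 2) (α - 1) * u (x - y)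
      = ∫ p, χ p.2 * u (x.1 - p.1, x.2 - ε * p.2 - ‖p.1‖ ^ 2) ∂(volume.prod volume) := by
        rw [← integral_congr_ae (Eventually.of_forall hshear)]
        exact ((measurePreserving_parabolicShear hε).integral_comp' _).symm
    _ = ∫ t, ∫ y, χ t * u (x.1 - y, x.2 - ε * t - ‖y‖ ^ 2) :=
        integral_prod_symm _ (integrable_indicator_cpow_mul_parabola u x.1 x.2 hε hα)
    _ = mellin (fun t => parabolaIntegral u (x.1, x.2 - ε * t)) α := by
        simp_rw [hfibre]
        exact integral_indicator measurableSet_Ioi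

end Parabola

theorem parP_entire_extension_general (n : ℕ) (σ : Bool)
    (f : SchwartzMap (Rn n) ℂ) (x : Rn n) :
    ∃ G : ℂ → ℂ, Differentiable ℂ G ∧
      (∀ α : ℂ, 0 < α.re → G α = parP n σ α (fun y => f y) x) ∧
      G 0 = parRadon n (fun y => f y) x := by
  set ε := ppowSign σ
  set φ : ℕ → ℝ → ℂ := fun k t =>
    parabolaIntegral ⇑((∂_{((0 : EuclideanSpace ℝ (Fin (n - 1))), -ε)})^[k] f) (x.1, x.2 - ε * t)
  have hderiv (k : ℕ) (t : ℝ) : HasDerivAt (φ k) (φ (k + 1) t) t := by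
    simpa only [φ, Function.iterate_succ_apply'] using hasDerivAt_parabolaIntegral _ x.1 x.2 ε t
  have hdecay (k : ℕ) (a : ℝ) : φ k =O[atTop] (· ^ (-a)) :=
    isBigO_parabolaIntegral _ x.1 x.2 (abs_ppowSign σ) a
  refine ⟨mellinGammaExtension φ, differentiable_mellinGammaExtension hderiv hdecay,
    fun α hα => ?_, ?_⟩
  · rw [mellinGammaExtension_of_re_pos hderiv hdecay hα, parP, one_div,
      integral_ppow_mul_eq_mellin σ f x hα]
    rfl
  · rw [mellinGammaExtension_zero hderiv hdecay]
    simp [φ, parabolaIntegral, parRadon]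

/-- For every Schwartz function f, every x, and each sign, α ↦ (P_±^α f)(x) extends
to an entire function whose value at 0 is the parabolic Radon transform (Pf)(x). -/
theorem parP_entire_extension (n : ℕ) (hn : 2 ≤ n) (σ : Bool)
    (f : SchwartzMap (Rn n) ℂ) (x : Rn n) :
    ∃ G : ℂ → ℂ, Differentiable ℂ G ∧
      (∀ α : ℂ, 0 < α.re → G α = parP n σ α (fun y => f y) x) ∧
      G 0 = parRadon n (fun y => f y) x :=
  parP_entire_extension_general n σ f x
end
end

section
/- Let α ∈ ℂ with Re α > 0, let k be a positive integer, and let f be a Schwartz function on ℝⁿ. Then for each choice of sign ± and every x ∈ ℝⁿ, (P_±^α f)(x) = (±1)^k (P_±^{α+k} (∂_n^k f))(x) = (±1)^k (∂_n^k (P_±^{α+k} f))(x), where ∂_n denotes the partial derivative in the last coordinate. -/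
open MeasureTheory Complex

noncomputable section

/-- The partial derivative in the last coordinate, ∂ₙ. -/
def dn (n : ℕ) (g : Rn n → ℂ) : Rn n → ℂ := fun x => fderiv ℝ g x (0, 1)

/-!
Write `y = (y', t)`. For fixed `y'` the kernel is `(t - |y'|²)_±^{α-1}`, and
`(s)_±^{α-1} = ±α⁻¹ d/ds (s)_±^α`, so Fubini and an integration by parts in `t` give
`P_±^α f = ±P_±^{α+1} ∂ₙ f` (with `Γ(α + 1) = α Γ(α)`). The boundary term vanishes at
`t = |y'|²` because `Re α > 0`, and at the far end because the product and its derivative are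
both integrable. The kernel is integrable against `(1 + |y|)^{-N}` for large `N`, so `P_±^β`
commutes with `∂ₙ` by differentiation under the integral sign. Iterating both identities
`k` times gives the theorem.
-/

open Filter Set Topology LineDeriv

section Ppow

lemma ppow_false (t : ℝ) (l : ℂ) : ppow false t l = ppow true (-t) l := by
  simp [ppow]

lemma ppow_true_of_nonpos {t : ℝ} (ht : t ≤ 0) (l : ℂ) : ppow true t l = 0 := by
  simp [ppow, not_lt.2 ht]

lemma ppow_true_of_pos {t : ℝ} (ht : 0 < t) (l : ℂ) : ppow true t l = (t : ℂ) ^ l := by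
  rw [ppow, if_pos rfl, if_pos ht, cpow_def_of_ne_zero (ofReal_ne_zero.2 ht.ne'),
    ← ofReal_log ht.le, mul_comm]

lemma norm_ppow_le (σ : Bool) (t : ℝ) (l : ℂ) : ‖ppow σ t l‖ ≤ |t| ^ l.re := by
  have htrue : ∀ t, ‖ppow true t l‖ ≤ |t| ^ l.re := by
    intro t
    rcases lt_or_ge 0 t with ht | ht
    · rw [ppow_true_of_pos ht, norm_cpow_eq_rpow_re_of_pos ht, abs_of_pos ht]
    · rw [ppow_true_of_nonpos ht, norm_zero]
      positivity
  cases σ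
  · simpa [ppow_false] using htrue (-t)
  · exact htrue t

lemma measurable_ppow (σ : Bool) (l : ℂ) : Measurable fun t : ℝ => ppow σ t l := by
  unfold ppow
  cases σ
  · simp only [Bool.false_eq_true, if_false]
    exact Measurable.ite measurableSet_Iio (by fun_prop) measurable_const
  · simp only [if_true]
    exact Measurable.ite measurableSet_Ioi (by fun_prop) measurable_const

lemma hasDerivAt_ppow_true_sub {β : ℂ} (hβ : β ≠ 0) {c t : ℝ} (ht : c < t) :
    HasDerivAt (fun u => ppow true (u - c) β) (β * ppow true (t - c) (β - 1)) t := by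
  have hpos : 0 < t - c := sub_pos.2 ht
  rw [ppow_true_of_pos hpos]
  refine ((hasDerivAt_ofReal_cpow_const hpos.ne' hβ).comp_sub_const t c).congr_of_eventuallyEq ?_
  filter_upwards [Ioi_mem_nhds ht] with u hu
  exact ppow_true_of_pos (sub_pos.2 hu) β

lemma tendsto_ppow_true_sub_nhdsGT {β : ℂ} (hβ : 0 < β.re) (c : ℝ) :
    Tendsto (fun t => ppow true (t - c) β) (𝓝[>] c) (𝓝 0) := by
  have hcont : Continuous fun t : ℝ => |t - c| ^ β.re :=
    (continuous_abs.comp (continuous_sub_right c)).rpow_const fun _ => Or.inr hβ.le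
  refine squeeze_zero_norm (fun t => norm_ppow_le true (t - c) β) ?_
  simpa [Real.zero_rpow hβ.ne'] using (hcont.tendsto c).mono_left nhdsWithin_le_nhds

end Ppow

section IntegrationByParts

variable {β : ℂ} {h h' : ℝ → ℂ}

lemma integral_ppow_true_sub_mul_eq (hβ : 0 < β.re) (c : ℝ)
    (hd : ∀ t, HasDerivAt h (h' t) t)
    (hint₁ : Integrable fun t => ppow true (t - c) (β - 1) * h t)
    (hint₂ : Integrable fun t => ppow true (t - c) β * h' t)
    (hint₃ : Integrable fun t => ppow true (t - c) β * h t) :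
    ∫ t, ppow true (t - c) (β - 1) * h t = -β⁻¹ * ∫ t, ppow true (t - c) β * h' t := by
  have hβ0 : β ≠ 0 := fun h0 => by simp [h0] at hβ
  set u : ℝ → ℂ := fun t => ppow true (t - c) β
  set u' : ℝ → ℂ := fun t => β * ppow true (t - c) (β - 1)
  have hu : ∀ t ∈ Ioi c, HasDerivAt u (u' t) t := fun t ht => hasDerivAt_ppow_true_sub hβ0 ht
  have hu'h : Integrable (u' * h) := by
    simpa only [Pi.mul_def, u', mul_assoc] using hint₁.const_mul β
  have h_zero : Tendsto (u * h) (𝓝[>] c) (𝓝 0) := by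
    simpa [u, Pi.mul_def] using (tendsto_ppow_true_sub_nhdsGT hβ c).mul
      ((hd c).continuousAt.tendsto.mono_left nhdsWithin_le_nhds)
  have h_infty : Tendsto (u * h) atTop (𝓝 0) :=
    tendsto_zero_of_hasDerivAt_of_integrableOn_Ioi (a := c)
      (fun t ht => (hu t ht).mul (hd t)) (hu'h.add hint₂).integrableOn hint₃.integrableOn
  have hibp := integral_Ioi_mul_deriv_eq_deriv_mul hu (fun t _ => hd t) hint₂.integrableOn
    hu'h.integrableOn h_zero h_infty
  have hvanish : ∀ (γ : ℂ) (q : ℝ → ℂ), ∀ t ∉ Ioi c, ppow true (t - c) γ * q t = 0 :=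
    fun γ q t ht => by rw [ppow_true_of_nonpos (by simpa using ht), zero_mul]
  simp only [u, u', mul_assoc, integral_const_mul,
    setIntegral_eq_integral_of_forall_compl_eq_zero (hvanish _ _)] at hibp
  rw [hibp]
  field_simp
  ring

lemma integral_ppow_sub_mul_eq (σ : Bool) (hβ : 0 < β.re) (c : ℝ)
    (hd : ∀ t, HasDerivAt h (h' t) t)
    (hint₁ : Integrable fun t => ppow σ (t - c) (β - 1) * h t)
    (hint₂ : Integrable fun t => ppow σ (t - c) β * h' t)
    (hint₃ : Integrable fun t => ppow σ (t - c) β * h t) :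
    ∫ t, ppow σ (t - c) (β - 1) * h t
      = -(if σ then 1 else -1 : ℂ) * β⁻¹ * ∫ t, ppow σ (t - c) β * h' t := by
  cases σ
  case true => simpa using integral_ppow_true_sub_mul_eq hβ c hd hint₁ hint₂ hint₃
  case false =>
    -- `t ↦ -t` turns `(t - c)₋` into `(t + c)₊`
    have hreflect : ∀ (γ : ℂ) (q : ℝ → ℂ) (t : ℝ),
        ppow false (-t - c) γ * q (-t) = ppow true (t - -c) γ * q (-t) := fun γ q t => by
      rw [ppow_false]
      ring_nf
    have hint : ∀ (γ : ℂ) (q : ℝ → ℂ), (Integrable fun t => ppow false (t - c) γ * q t) →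
        Integrable fun u => ppow true (u - -c) γ * q (-u) :=
      fun γ q hq => hq.comp_neg.congr (ae_of_all _ (hreflect γ q))
    have hintegral : ∀ (γ : ℂ) (q : ℝ → ℂ), ∫ t, ppow false (t - c) γ * q t
        = ∫ u, ppow true (u - -c) γ * q (-u) := fun γ q => by
      rw [← integral_neg_eq_self]
      exact integral_congr_ae (ae_of_all _ (hreflect γ q))
    have hd' : ∀ u, HasDerivAt (fun u => h (-u)) (-h' (-u)) u := fun u => by
      simpa [Function.comp_def] using (hd (-u)).scomp u (hasDerivAt_neg u)
    have := integral_ppow_true_sub_mul_eq hβ (-c) hd' (hint _ _ hint₁)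
      ((hint _ _ hint₂).neg.congr (ae_of_all _ fun _ => (mul_neg _ _).symm)) (hint _ _ hint₃)
    simp only [hintegral, this, mul_neg, integral_neg]
    simp

end IntegrationByParts

lemma one_add_norm_sub_rpow_neg_le {F : Type*} [SeminormedAddCommGroup F] {N : ℝ} (hN : 0 ≤ N)
    (x y : F) :
    (1 + ‖x - y‖) ^ (-N) ≤ (1 + ‖x‖) ^ N * (1 + ‖y‖) ^ (-N) := by
  have hy : 1 + ‖y‖ ≤ (1 + ‖x‖) * (1 + ‖x - y‖) := by
    nlinarith [norm_le_norm_add_norm_sub' y x, norm_sub_rev x y, norm_nonneg x,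
      norm_nonneg (x - y)]
  rw [Real.rpow_neg (by positivity), Real.rpow_neg (by positivity), ← div_eq_mul_inv,
    inv_eq_one_div, div_le_div_iff₀ (by positivity) (by positivity), one_mul]
  exact (Real.rpow_le_rpow (by positivity) hy hN).trans_eq
    (Real.mul_rpow (by positivity) (by positivity))

section SchwartzDecay

variable {F G : Type*} [NormedAddCommGroup F] [NormedSpace ℝ F]
  [NormedAddCommGroup G] [NormedSpace ℝ G]

lemma SchwartzMap.exists_norm_le_mul_one_add_norm_rpow_neg (f : SchwartzMap F G) (N : ℝ) :
    ∃ C, 0 ≤ C ∧ ∀ x, ‖f x‖ ≤ C * (1 + ‖x‖) ^ (-N) := by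
  obtain ⟨k, hNk⟩ := exists_nat_ge N
  set C := 2 ^ k * (Finset.Iic (k, 0)).sup (fun m => SchwartzMap.seminorm ℝ m.1 m.2) f
  refine ⟨C, by positivity, fun x => ?_⟩
  have hx : 1 ≤ 1 + ‖x‖ := le_add_of_nonneg_right (norm_nonneg x)
  have hdecay : (1 + ‖x‖) ^ (k : ℝ) * ‖f x‖ ≤ C := by
    simpa [norm_iteratedFDeriv_zero] using
      SchwartzMap.one_add_le_sup_seminorm_apply (𝕜 := ℝ) (m := (k, 0)) le_rfl le_rfl f x
  calc ‖f x‖ = (1 + ‖x‖) ^ (-N) * ((1 + ‖x‖) ^ N * ‖f x‖) := by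
        rw [← mul_assoc, ← Real.rpow_add (by positivity), neg_add_cancel, Real.rpow_zero, one_mul]
    _ ≤ (1 + ‖x‖) ^ (-N) * C := by
        gcongr
        exact (mul_le_mul_of_nonneg_right (Real.rpow_le_rpow_of_exponent_le hx hNk)
          (norm_nonneg _)).trans hdecay
    _ = C * (1 + ‖x‖) ^ (-N) := mul_comm _ _

lemma SchwartzMap.exists_norm_comp_sub_le (f : SchwartzMap F G) {N : ℝ} (hN : 0 ≤ N) :
    ∃ C, 0 ≤ C ∧ ∀ x y, ‖f (x - y)‖ ≤ C * (1 + ‖x‖) ^ N * (1 + ‖y‖) ^ (-N) := by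
  obtain ⟨C, hC, hf⟩ := f.exists_norm_le_mul_one_add_norm_rpow_neg N
  refine ⟨C, hC, fun x y => (hf (x - y)).trans ?_⟩
  rw [mul_assoc]
  exact mul_le_mul_of_nonneg_left (one_add_norm_sub_rpow_neg_le hN x y) hC

end SchwartzDecay

section KernelConvolution

variable {F : Type*} [NormedAddCommGroup F] [NormedSpace ℝ F] [MeasurableSpace F]
  [OpensMeasurableSpace F] {ν : Measure F} {K : F → ℂ} {N : ℝ}

lemma integrable_mul_schwartz_comp_sub (hK : AEStronglyMeasurable K ν)
    (hKN : Integrable (fun y => ‖K y‖ * (1 + ‖y‖) ^ (-N)) ν) (hN : 0 ≤ N)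
    (f : SchwartzMap F ℂ) (x : F) : Integrable (fun y => K y * f (x - y)) ν := by
  obtain ⟨C, -, hC⟩ := f.exists_norm_comp_sub_le hN
  refine (hKN.const_mul (C * (1 + ‖x‖) ^ N)).mono'
    (hK.mul (f.continuous.comp (continuous_sub_left x)).aestronglyMeasurable)
    (ae_of_all _ fun y => ?_)
  rw [norm_mul]
  calc ‖K y‖ * ‖f (x - y)‖ ≤ ‖K y‖ * (C * (1 + ‖x‖) ^ N * (1 + ‖y‖) ^ (-N)) := by
        gcongr
        exact hC x y
    _ = C * (1 + ‖x‖) ^ N * (‖K y‖ * (1 + ‖y‖) ^ (-N)) := by ring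

lemma hasFDerivAt_integral_mul_schwartz_comp_sub [SecondCountableTopology F]
    (hK : AEStronglyMeasurable K ν)
    (hKN : Integrable (fun y => ‖K y‖ * (1 + ‖y‖) ^ (-N)) ν) (hN : 0 ≤ N)
    (f : SchwartzMap F ℂ) (x₀ : F) :
    Integrable (fun y => K y • fderiv ℝ f (x₀ - y)) ν ∧
      HasFDerivAt (fun x => ∫ y, K y * f (x - y) ∂ν)
        (∫ y, K y • fderiv ℝ f (x₀ - y) ∂ν) x₀ := by
  obtain ⟨C, hC0, hC⟩ := (SchwartzMap.fderivCLM ℝ F ℂ f).exists_norm_comp_sub_le hN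
  set bound : F → ℝ := fun y => C * (2 + ‖x₀‖) ^ N * (‖K y‖ * (1 + ‖y‖) ^ (-N))
  have hbound : ∀ y, ∀ x ∈ Metric.ball x₀ 1, ‖K y • fderiv ℝ f (x - y)‖ ≤ bound y := by
    intro y x hx
    have hx' : 1 + ‖x‖ ≤ 2 + ‖x₀‖ := by
      linarith [norm_le_norm_add_norm_sub' x x₀, mem_ball_iff_norm.1 hx]
    rw [norm_smul]
    calc ‖K y‖ * ‖fderiv ℝ f (x - y)‖ ≤ ‖K y‖ * (C * (1 + ‖x‖) ^ N * (1 + ‖y‖) ^ (-N)) := by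
          gcongr
          exact hC x y
      _ ≤ ‖K y‖ * (C * (2 + ‖x₀‖) ^ N * (1 + ‖y‖) ^ (-N)) := by
          gcongr
      _ = bound y := by ring
  have hF'meas : AEStronglyMeasurable (fun y => K y • fderiv ℝ f (x₀ - y)) ν :=
    hK.smul ((SchwartzMap.fderivCLM ℝ F ℂ f).continuous.comp
      (continuous_sub_left x₀)).aestronglyMeasurable
  have hint : Integrable bound ν := hKN.const_mul _
  refine ⟨hint.mono' hF'meas (ae_of_all _ fun y => hbound y x₀ (Metric.mem_ball_self one_pos)), ?_⟩
  refine hasFDerivAt_integral_of_dominated_of_fderiv_le (Metric.ball_mem_nhds x₀ one_pos)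
    (Eventually.of_forall fun x =>
      hK.mul (f.continuous.comp (continuous_sub_left x)).aestronglyMeasurable)
    (integrable_mul_schwartz_comp_sub hK hKN hN f x₀) hF'meas (ae_of_all _ hbound) hint
    (ae_of_all _ fun y x _ => ?_)
  exact ((f.hasFDerivAt (x - y)).comp x ((hasFDerivAt_id x).sub_const y)).const_mul (K y)

end KernelConvolution

lemma integrable_indicator_Icc_abs_rpow {r : ℝ} (hr : -1 < r) :
    Integrable ((Icc (-1 : ℝ) 1).indicator fun s => |s| ^ r) := by
  have hpos : IntervalIntegrable (fun s : ℝ => |s| ^ r) volume 0 1 :=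
    (intervalIntegral.intervalIntegrable_rpow' hr).congr fun s hs => by
      rw [abs_of_pos (by simpa using hs.1)]
  have hneg : IntervalIntegrable (fun s : ℝ => |s| ^ r) volume (-1) 0 := by
    simpa using ((IntervalIntegrable.iff_comp_neg (by finiteness)).1 hpos).symm
  rw [integrable_indicator_iff measurableSet_Icc,
    ← intervalIntegrable_iff_integrableOn_Icc_of_le (by norm_num)]
  exact hneg.trans hpos

lemma abs_rpow_sub_one_le_indicator_add (a s : ℝ) :
    |s| ^ (a - 1) ≤ (Icc (-1 : ℝ) 1).indicator (fun s => |s| ^ (a - 1)) s + |s| ^ a := by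
  by_cases hs : s ∈ Icc (-1 : ℝ) 1
  · rw [indicator_of_mem hs]
    exact le_add_of_nonneg_right (by positivity)
  · have hs' : 1 ≤ |s| := by
      rw [mem_Icc, not_and_or, not_le, not_le] at hs
      rcases hs with hs | hs <;> [rw [abs_of_neg (by linarith)]; rw [abs_of_pos (by linarith)]] <;>
        linarith
    rw [indicator_of_notMem hs, zero_add]
    exact Real.rpow_le_rpow_of_exponent_le hs' (by linarith)

lemma integrable_mul_comp_sub_prod {E : Type*} [MeasurableSpace E] {μ : Measure E} [SFinite μ]
    {g : E → ℝ} {w : ℝ → ℝ} (hg : Integrable g μ) (hw : Integrable w) {φ : E → ℝ}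
    (hφ : Measurable φ) :
    Integrable (fun y : E × ℝ => g y.1 * w (y.2 - φ y.1)) (μ.prod volume) := by
  have hshear : MeasurePreserving (fun y : E × ℝ => (y.1, y.2 - φ y.1))
      (μ.prod volume) (μ.prod volume) :=
    (MeasurePreserving.id μ).skew_product (by fun_prop)
      (ae_of_all _ fun y₁ => (measurePreserving_sub_right volume (φ y₁)).map_eq)
  exact (hshear.integrable_comp (hg.mul_prod hw).aestronglyMeasurable).2 (hg.mul_prod hw)

def parabolicKernel {E : Type*} [SeminormedAddCommGroup E] (σ : Bool) (α : ℂ) (y : E × ℝ) : ℂ :=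
  ppow σ (y.2 - ‖y.1‖ ^ 2) (α - 1)

lemma measurable_parabolicKernel {E : Type*} [SeminormedAddCommGroup E] [MeasurableSpace E]
    [OpensMeasurableSpace E] (σ : Bool) (α : ℂ) : Measurable (parabolicKernel (E := E) σ α) :=
  (measurable_ppow σ (α - 1)).comp (by fun_prop)

section ParabolicKernel

variable {E : Type*} [NormedAddCommGroup E] [NormedSpace ℝ E] [FiniteDimensional ℝ E]
  [MeasurableSpace E] [BorelSpace E] {μ : Measure E} [μ.IsAddHaarMeasure]

lemma integrable_norm_parabolicKernel_mul (σ : Bool) {α : ℂ} (hα : 0 < α.re) {N : ℝ}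
    (hN : Module.finrank ℝ E + 1 + 2 * α.re < N) :
    Integrable (fun y : E × ℝ => ‖parabolicKernel σ α y‖ * (1 + ‖y‖) ^ (-N)) (μ.prod volume) := by
  set a := α.re
  -- `|s|^(a-1)` splits into a singular part near the parabola `s = 0`, integrable after the
  -- shear `t ↦ t - |y'|²`, and the growth `|s|^a ≤ (1 + |y|)^(2a)`
  set w := (Icc (-1 : ℝ) 1).indicator fun s => |s| ^ (a - 1)
  have hdom : Integrable (fun y : E × ℝ =>
      (1 + ‖y.1‖) ^ (-N) * w (y.2 - ‖y.1‖ ^ 2) + (1 + ‖y‖) ^ (-(N - 2 * a))) (μ.prod volume) := by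
    refine (integrable_mul_comp_sub_prod (integrable_one_add_norm (by linarith))
      (integrable_indicator_Icc_abs_rpow (by linarith))
      (by fun_prop : Measurable fun y₁ : E => ‖y₁‖ ^ 2)).add
      (integrable_one_add_norm ?_)
    rw [Module.finrank_prod, Module.finrank_self]
    push_cast
    linarith
  refine hdom.mono' ((measurable_parabolicKernel σ α).norm.mul (by fun_prop)).aestronglyMeasurable
    (ae_of_all _ fun y => ?_)
  set s := y.2 - ‖y.1‖ ^ 2
  have hy₁ := norm_fst_le y
  have hy₂ : |y.2| ≤ ‖y‖ := norm_snd_le y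
  have hs : |s| ≤ (1 + ‖y‖) ^ 2 := by
    rw [abs_le]
    constructor <;> nlinarith [neg_abs_le y.2, le_abs_self y.2, norm_nonneg y.1, norm_nonneg y]
  have hK : ‖parabolicKernel σ α y‖ ≤ w s + (1 + ‖y‖) ^ (2 * a) := by
    calc ‖parabolicKernel σ α y‖ ≤ |s| ^ (a - 1) := by
          simpa [a, parabolicKernel] using norm_ppow_le σ s (α - 1)
      _ ≤ w s + |s| ^ a := abs_rpow_sub_one_le_indicator_add a s
      _ ≤ w s + ((1 + ‖y‖) ^ 2) ^ a := by gcongr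
      _ = w s + (1 + ‖y‖) ^ (2 * a) := by
          rw [← Real.rpow_natCast, ← Real.rpow_mul (by positivity), Nat.cast_ofNat]
  have hw : 0 ≤ w s := indicator_nonneg (fun _ _ => by positivity) s
  rw [Real.norm_of_nonneg (by positivity)]
  calc ‖parabolicKernel σ α y‖ * (1 + ‖y‖) ^ (-N)
      ≤ (w s + (1 + ‖y‖) ^ (2 * a)) * (1 + ‖y‖) ^ (-N) := by gcongr
    _ = w s * (1 + ‖y‖) ^ (-N) + (1 + ‖y‖) ^ (-(N - 2 * a)) := by
        rw [add_mul, ← Real.rpow_add (by positivity)]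
        ring_nf
    _ ≤ (1 + ‖y.1‖) ^ (-N) * w s + (1 + ‖y‖) ^ (-(N - 2 * a)) := by
        have hdecay : (1 + ‖y‖) ^ (-N) ≤ (1 + ‖y.1‖) ^ (-N) :=
          Real.rpow_le_rpow_of_nonpos (by positivity) (by linarith) (by linarith)
        nlinarith

lemma exists_integrable_norm_parabolicKernel_mul (σ : Bool) {α : ℂ} (hα : 0 < α.re) :
    ∃ N : ℝ, 0 ≤ N ∧
      Integrable (fun y : E × ℝ => ‖parabolicKernel σ α y‖ * (1 + ‖y‖) ^ (-N)) (μ.prod volume) :=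
  ⟨Module.finrank ℝ E + 2 + 2 * α.re, by positivity,
    integrable_norm_parabolicKernel_mul σ hα (by linarith)⟩

lemma integrable_parabolicKernel_mul_schwartz (σ : Bool) {α : ℂ} (hα : 0 < α.re)
    (f : SchwartzMap (E × ℝ) ℂ) (x : E × ℝ) :
    Integrable (fun y => parabolicKernel σ α y * f (x - y)) (μ.prod volume) := by
  obtain ⟨N, hN, hKN⟩ := exists_integrable_norm_parabolicKernel_mul (μ := μ) σ hα
  exact integrable_mul_schwartz_comp_sub (measurable_parabolicKernel σ α).aestronglyMeasurable
    hKN hN f x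

lemma integral_parabolicKernel_mul_schwartz_eq (σ : Bool) {α : ℂ} (hα : 0 < α.re)
    (f : SchwartzMap (E × ℝ) ℂ) (x : E × ℝ) :
    ∫ y, parabolicKernel σ α y * f (x - y) ∂(μ.prod volume)
      = (if σ then 1 else -1 : ℂ) * α⁻¹ *
          ∫ y, parabolicKernel σ (α + 1) y * ∂_{((0, 1) : E × ℝ)} f (x - y) ∂(μ.prod volume) := by
  set e : E × ℝ := (0, 1)
  have hα₁ : 0 < (α + 1).re := by simp [hα.trans (lt_add_one _)]
  have hint₁ := integrable_parabolicKernel_mul_schwartz (μ := μ) σ hα f x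
  have hint₂ := integrable_parabolicKernel_mul_schwartz (μ := μ) σ hα₁ (∂_{e} f) x
  have hint₃ := integrable_parabolicKernel_mul_schwartz (μ := μ) σ hα₁ f x
  rw [integral_prod _ hint₁, integral_prod _ hint₂, ← integral_const_mul]
  refine integral_congr_ae ?_
  filter_upwards [hint₁.prod_right_ae, hint₂.prod_right_ae, hint₃.prod_right_ae]
    with y₁ h₁ h₂ h₃
  have hd : ∀ t : ℝ, HasDerivAt (fun t => f (x - (y₁, t))) (-∂_{e} f (x - (y₁, t))) t := by
    intro t
    have hline : HasDerivAt (fun t : ℝ => x - (y₁, t)) (-e) t :=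
      ((hasDerivAt_const t y₁).prodMk (hasDerivAt_id t)).const_sub x
    simpa [Function.comp_def, SchwartzMap.lineDerivOp_apply_eq_fderiv] using
      (f.hasFDerivAt (x - (y₁, t))).comp_hasDerivAt t hline
  simp only [parabolicKernel, add_sub_cancel_right] at h₁ h₂ h₃ ⊢
  rw [integral_ppow_sub_mul_eq σ hα (‖y₁‖ ^ 2) hd h₁ (by simpa using h₂.neg) h₃]
  simp [integral_neg]

end ParabolicKernel

section LastCoordinate

variable {n : ℕ} {σ : Bool}

local notation "∂ₙ[" n "]" =>
  (LineDeriv.lineDerivOp ((0, 1) : Rn n) : SchwartzMap (Rn n) ℂ → SchwartzMap (Rn n) ℂ)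

lemma parP_eq_integral_parabolicKernel (α : ℂ) (g : Rn n → ℂ) (x : Rn n) :
    parP n σ α g x
      = 1 / Gamma α * ∫ y, parabolicKernel σ α y * g (x - y)
          ∂((volume : Measure (EuclideanSpace ℝ (Fin (n - 1)))).prod volume) :=
  rfl

lemma parP_eq_mul_parP_lineDeriv {α : ℂ} (hα : 0 < α.re) (f : SchwartzMap (Rn n) ℂ)
    (x : Rn n) :
    parP n σ α f x = (if σ then 1 else -1) * parP n σ (α + 1) ⇑(∂ₙ[n] f) x := by
  have hα₀ : α ≠ 0 := fun h => by simp [h] at hα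
  have h := integral_parabolicKernel_mul_schwartz_eq (μ := volume) σ hα f x
  rw [parP_eq_integral_parabolicKernel, parP_eq_integral_parabolicKernel, h,
    Gamma_add_one α hα₀]
  field_simp

lemma dn_parP {β : ℂ} (hβ : 0 < β.re) (f : SchwartzMap (Rn n) ℂ) :
    dn n (parP n σ β f) = parP n σ β ⇑(∂ₙ[n] f) := by
  funext x
  obtain ⟨N, hN, hKN⟩ := exists_integrable_norm_parabolicKernel_mul
    (μ := (volume : Measure (EuclideanSpace ℝ (Fin (n - 1))))) σ hβ
  obtain ⟨hint, hderiv⟩ := hasFDerivAt_integral_mul_schwartz_comp_sub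
    (measurable_parabolicKernel σ β).aestronglyMeasurable hKN hN f x
  have hP : parP n σ β f = fun x => _ := funext (parP_eq_integral_parabolicKernel β f)
  rw [dn, hP, (hderiv.const_mul _).fderiv, smul_apply,
    ContinuousLinearMap.integral_apply hint, parP_eq_integral_parabolicKernel]
  rfl

lemma parP_eq_pow_mul_parP_iterate_lineDeriv (f : SchwartzMap (Rn n) ℂ) (x : Rn n) (k : ℕ)
    {α : ℂ} (hα : 0 < α.re) :
    parP n σ α f x
      = (if σ then 1 else -1) ^ k * parP n σ (α + k) ⇑((∂ₙ[n])^[k] f) x := by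
  induction k generalizing α f with
  | zero => simp
  | succ k ih =>
    rw [parP_eq_mul_parP_lineDeriv hα, ih _ (by simp; linarith), ← Function.iterate_succ_apply,
      show α + 1 + k = α + ↑(k + 1) by push_cast; ring, pow_succ']
    ring

lemma dn_iterate_coe (k : ℕ) (f : SchwartzMap (Rn n) ℂ) :
    (dn n)^[k] f = ⇑((∂ₙ[n])^[k] f) :=
  ((Function.Semiconj.iterate_right (f := fun g : SchwartzMap (Rn n) ℂ => ⇑g)
    (fun _ => rfl) k) f).symm

lemma dn_iterate_parP {β : ℂ} (hβ : 0 < β.re) (k : ℕ) (f : SchwartzMap (Rn n) ℂ) :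
    (dn n)^[k] (parP n σ β f) = parP n σ β ⇑((∂ₙ[n])^[k] f) :=
  ((Function.Semiconj.iterate_right (f := fun g : SchwartzMap (Rn n) ℂ => parP n σ β ⇑g)
    (fun g => (dn_parP hβ g).symm) k) f).symm

end LastCoordinate

theorem parP_shift_index_general (n : ℕ) (σ : Bool)
    (α : ℂ) (hα : 0 < α.re) (k : ℕ)
    (f : SchwartzMap (Rn n) ℂ) (x : Rn n) :
    parP n σ α (fun y => f y) x
      = (if σ then (1 : ℂ) else -1) ^ k * parP n σ (α + k) ((dn n)^[k] (fun y => f y)) x ∧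
    parP n σ α (fun y => f y) x
      = (if σ then (1 : ℂ) else -1) ^ k * (dn n)^[k] (parP n σ (α + k) (fun y => f y)) x := by
  have hαk : 0 < (α + k).re := by simp; positivity
  have h := parP_eq_pow_mul_parP_iterate_lineDeriv f x k hα (σ := σ)
  exact ⟨by rwa [dn_iterate_coe], by rwa [dn_iterate_parP hαk]⟩

/-- (P_±^α f)(x) = (±1)^k (P_±^{α+k} ∂ₙ^k f)(x) = (±1)^k (∂ₙ^k P_±^{α+k} f)(x). -/
theorem parP_shift_index (n : ℕ) (hn : 2 ≤ n) (σ : Bool)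
    (α : ℂ) (hα : 0 < α.re) (k : ℕ) (hk : 0 < k)
    (f : SchwartzMap (Rn n) ℂ) (x : Rn n) :
    parP n σ α (fun y => f y) x
      = (if σ then (1 : ℂ) else -1) ^ k * parP n σ (α + k) ((dn n)^[k] (fun y => f y)) x ∧
    parP n σ α (fun y => f y) x
      = (if σ then (1 : ℂ) else -1) ^ k * (dn n)^[k] (parP n σ (α + k) (fun y => f y)) x :=
  parP_shift_index_general n σ α hα k f x
end
end

section
/- Let α ∈ ℂ with Re α > 0, let ε > 0, and let x ∈ ℝⁿ. Then the function y ↦ (y_n − |y'|²)_+^{α−1} e^{−ε y_n} e^{i x·y} is integrable on ℝⁿ and (1/Γ(α)) ∫_{ℝⁿ} (y_n − |y'|²)_+^{α−1} e^{−ε y_n} e^{i x·y} dy = π^{(n−1)/2} (ε − i x_n)^{−α−(n−1)/2} exp(−|x'|²/(4(ε − i x_n))), where for z ∈ ℂ with Re z > 0 and λ ∈ ℂ the power z^λ = exp(λ(log|z| + i·arg z)) is taken with −π/2 < arg z < π/2. -/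
/-! The shear `(y', yₙ) ↦ (y', yₙ + |y'|²)` preserves Lebesgue measure and splits the integrand
into `g(y') h(yₙ)`, where, with `b = ε - i xₙ`, `g(y') = exp(-b|y'|² + i x'·y')` and
`h(t) = t₊^{α-1} e^{-bt}`. The integral of `g` is the Fourier transform of a complex Gaussian,
`(π/b)^{(n-1)/2} exp(-|x'|²/(4b))`, and that of `h` is `Γ(α) b^{-α}`: both sides of the latter
are holomorphic in `b` on the right half-plane and agree for real `b > 0`. -/

open MeasureTheory Complex

noncomputable section

open Set Filter Topology

lemma Complex.ofReal_mul_cpow {r : ℝ} (hr : 0 ≤ r) (z w : ℂ) :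
    ((r : ℂ) * z) ^ w = (r : ℂ) ^ w * z ^ w := by
  rcases hr.eq_or_lt with rfl | hr
  · rcases eq_or_ne w 0 with rfl | hw <;> simp [zero_cpow, *]
  rcases eq_or_ne z 0 with rfl | hz
  · rcases eq_or_ne w 0 with rfl | hw <;> simp [zero_cpow, *]
  have hr' : (r : ℂ) ≠ 0 := ofReal_ne_zero.mpr hr.ne'
  rw [cpow_def_of_ne_zero (mul_ne_zero hr' hz), cpow_def_of_ne_zero hr', cpow_def_of_ne_zero hz,
    log_ofReal_mul hr hz, ofReal_log hr.le, add_mul, exp_add]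

lemma Complex.one_div_cpow {z : ℂ} (hz : z.arg ≠ Real.pi) (s : ℂ) : (1 / z) ^ s = z ^ (-s) := by
  rw [one_div, inv_cpow _ _ hz, cpow_neg]

lemma Complex.ofReal_div_cpow_mul_one_div_cpow {r : ℝ} (hr : 0 ≤ r) {z : ℂ} (hz : z ∈ slitPlane)
    (s t : ℂ) : ((r : ℂ) / z) ^ s * (1 / z) ^ t = (r : ℂ) ^ s * z ^ (-t - s) := by
  rw [div_eq_mul_one_div (r : ℂ), ofReal_mul_cpow hr, one_div_cpow (slitPlane_arg_ne_pi hz),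
    one_div_cpow (slitPlane_arg_ne_pi hz), sub_eq_add_neg, add_comm (-t),
    cpow_add _ _ (slitPlane_ne_zero hz), mul_assoc]

lemma Complex.frequently_nhdsNE_ofReal {p : ℂ → Prop} {x : ℝ} (h : ∀ᶠ r : ℝ in 𝓝 x, p r) :
    ∃ᶠ z in 𝓝[≠] (x : ℂ), p z :=
  ((continuous_ofReal.continuousWithinAt (s := {x}ᶜ)).tendsto_nhdsWithin
    fun _ h ↦ by simpa using h).frequently
    (h.filter_mono nhdsWithin_le_nhds).frequently

lemma norm_cpow_mul_cexp_neg_mul {t : ℝ} (ht : 0 < t) (a z : ℂ) :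
    ‖(t : ℂ) ^ a * cexp (-(z * t))‖ = t ^ a.re * Real.exp (-(z.re * t)) := by
  rw [norm_mul, norm_cpow_eq_rpow_re_of_pos ht, norm_exp]
  simp

lemma integrableOn_cpow_mul_cexp_neg_mul_Ioi {a b : ℂ} (ha : 0 < a.re) (hb : 0 < b.re) :
    IntegrableOn (fun t : ℝ ↦ (t : ℂ) ^ (a - 1) * cexp (-(b * t))) (Ioi 0) := by
  have hcont : ContinuousOn (fun t : ℝ ↦ (t : ℂ) ^ (a - 1) * cexp (-(b * t))) (Ioi 0) :=
    fun t (ht : 0 < t) ↦ ((continuousAt_ofReal_cpow_const t _ (Or.inr ht.ne')).mul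
      (by fun_prop)).continuousWithinAt
  have hbound : IntegrableOn (fun t : ℝ ↦ t ^ (a.re - 1) * Real.exp (-(b.re * t))) (Ioi 0) := by
    simpa using integrableOn_rpow_mul_exp_neg_mul_rpow (p := 1) (by linarith) one_pos hb
  refine Integrable.mono' hbound (hcont.aestronglyMeasurable measurableSet_Ioi) ?_
  filter_upwards [ae_restrict_mem measurableSet_Ioi] with t ht
  rw [norm_cpow_mul_cexp_neg_mul ht]
  simp

lemma hasDerivAt_integral_cpow_mul_cexp_neg_mul_Ioi {a z : ℂ} (ha : 0 < a.re) (hz : 0 < z.re) :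
    HasDerivAt (fun w : ℂ ↦ ∫ t in Ioi (0 : ℝ), (t : ℂ) ^ (a - 1) * cexp (-(w * t)))
      (∫ t in Ioi (0 : ℝ), -((t : ℂ) ^ a * cexp (-(z * t)))) z := by
  obtain ⟨c, hc, hcz⟩ := exists_between hz
  have hnhds : {w : ℂ | c < w.re} ∈ 𝓝 z :=
    (isOpen_lt continuous_const continuous_re).mem_nhds hcz
  have hint : ∀ w : ℂ, c ≤ w.re →
      IntegrableOn (fun t : ℝ ↦ (t : ℂ) ^ a * cexp (-(w * t))) (Ioi 0) := fun w hw ↦ by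
    simpa using integrableOn_cpow_mul_cexp_neg_mul_Ioi (a := a + 1) (by simp; linarith)
      (by linarith : 0 < w.re)
  refine (hasDerivAt_integral_of_dominated_loc_of_deriv_le (μ := volume.restrict (Ioi (0 : ℝ)))
    (F := fun w (t : ℝ) ↦ (t : ℂ) ^ (a - 1) * cexp (-(w * t)))
    (F' := fun w (t : ℝ) ↦ -((t : ℂ) ^ a * cexp (-(w * t))))
    (bound := fun t : ℝ ↦ ‖(t : ℂ) ^ a * cexp (-((c : ℂ) * t))‖) hnhds ?_
    (integrableOn_cpow_mul_cexp_neg_mul_Ioi ha hz) (hint z hcz.le).aestronglyMeasurable.neg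
    ?_ (hint c (by simp)).norm ?_).2
  · filter_upwards [hnhds] with w (hw : c < w.re)
    exact (integrableOn_cpow_mul_cexp_neg_mul_Ioi ha (hc.trans hw)).aestronglyMeasurable
  · filter_upwards [ae_restrict_mem measurableSet_Ioi] with t (ht : 0 < t) w (hw : c < w.re)
    rw [norm_neg, norm_cpow_mul_cexp_neg_mul ht, norm_cpow_mul_cexp_neg_mul ht, ofReal_re]
    gcongr
  · filter_upwards [ae_restrict_mem measurableSet_Ioi] with t (ht : 0 < t) w _
    have hpow : (t : ℂ) ^ a = (t : ℂ) ^ (a - 1) * t := by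
      conv_lhs => rw [← sub_add_cancel a 1]
      rw [cpow_add _ _ (ofReal_ne_zero.mpr ht.ne'), cpow_one]
    refine ((((hasDerivAt_id w).mul_const (t : ℂ)).neg.cexp).const_mul
      ((t : ℂ) ^ (a - 1))).congr_deriv ?_
    rw [hpow]
    simp only [Pi.neg_apply, id_eq]
    ring

lemma integral_cpow_mul_cexp_neg_mul_Ioi {a b : ℂ} (ha : 0 < a.re) (hb : 0 < b.re) :
    ∫ t in Ioi (0 : ℝ), (t : ℂ) ^ (a - 1) * cexp (-(b * t)) = (1 / b) ^ a * Gamma a := by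
  let U : Set ℂ := {z | 0 < z.re}
  have hU : IsOpen U := isOpen_lt continuous_const continuous_re
  have hlaplace : AnalyticOnNhd ℂ
      (fun w : ℂ ↦ ∫ t in Ioi (0 : ℝ), (t : ℂ) ^ (a - 1) * cexp (-(w * t))) U :=
    DifferentiableOn.analyticOnNhd (fun w hw ↦
      (hasDerivAt_integral_cpow_mul_cexp_neg_mul_Ioi ha hw).differentiableAt.differentiableWithinAt)
      hU
  have hgamma : AnalyticOnNhd ℂ (fun w : ℂ ↦ (1 / w) ^ a * Gamma a) U := by
    refine DifferentiableOn.analyticOnNhd (fun w (hw : 0 < w.re) ↦ ?_) hU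
    have hw0 : w ≠ 0 := fun h ↦ by simp [h] at hw
    have hinv : 1 / w ∈ slitPlane := by
      rw [mem_slitPlane_iff, one_div, inv_re]
      exact Or.inl (div_pos hw (normSq_pos.2 hw0))
    exact (((differentiableAt_const _).div differentiableAt_id hw0).cpow_const hinv).mul_const _
      |>.differentiableWithinAt
  refine hlaplace.eqOn_of_preconnected_of_frequently_eq hgamma
    (convex_halfSpace_re_gt 0).isPreconnected (z₀ := ((1 : ℝ) : ℂ)) (by simp [U]) ?_ hb
  exact frequently_nhdsNE_ofReal <|
    (lt_mem_nhds one_pos).mono fun r hr ↦ Complex.integral_cpow_mul_exp_neg_mul_Ioi ha hr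

lemma ppow_true_mul_eq_indicator (l : ℂ) (f : ℝ → ℂ) :
    (fun t ↦ ppow true t l * f t) = (Ioi 0).indicator (fun t : ℝ ↦ (t : ℂ) ^ l * f t) := by
  ext t
  by_cases ht : 0 < t
  · simp [ppow, ht, cpow_def_of_ne_zero (ofReal_ne_zero.mpr ht.ne'), ofReal_log ht.le, mul_comm l]
  · simp [ppow, ht]

lemma integrable_ppow_true_mul_cexp_neg_mul {a b : ℂ} (ha : 0 < a.re) (hb : 0 < b.re) :
    Integrable (fun t ↦ ppow true t (a - 1) * cexp (-(b * t))) := by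
  rw [ppow_true_mul_eq_indicator, integrable_indicator_iff measurableSet_Ioi]
  exact integrableOn_cpow_mul_cexp_neg_mul_Ioi ha hb

lemma integral_ppow_true_mul_cexp_neg_mul {a b : ℂ} (ha : 0 < a.re) (hb : 0 < b.re) :
    ∫ t, ppow true t (a - 1) * cexp (-(b * t)) = (1 / b) ^ a * Gamma a := by
  rw [ppow_true_mul_eq_indicator, integral_indicator measurableSet_Ioi]
  exact integral_cpow_mul_cexp_neg_mul_Ioi ha hb

section Shear

variable {X G : Type*} [MeasurableSpace X] [AddGroup G] [MeasurableSpace G] [MeasurableAdd₂ G]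
  [MeasurableSub₂ G]

def MeasurableEquiv.prodAddFun (f : X → G) (hf : Measurable f) : X × G ≃ᵐ X × G where
  toFun p := (p.1, p.2 + f p.1)
  invFun p := (p.1, p.2 - f p.1)
  left_inv p := by simp
  right_inv p := by simp
  measurable_toFun := measurable_fst.prodMk (measurable_snd.add (hf.comp measurable_fst))
  measurable_invFun := measurable_fst.prodMk (measurable_snd.sub (hf.comp measurable_fst))

lemma MeasurableEquiv.measurePreserving_prodAddFun (μ : Measure X) (ν : Measure G) [SFinite μ]
    [SFinite ν] [ν.IsAddRightInvariant] {f : X → G} (hf : Measurable f) :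
    MeasurePreserving (prodAddFun f hf) (μ.prod ν) (μ.prod ν) :=
  (MeasurePreserving.id μ).skew_product (g := fun x y ↦ y + f x)
    (measurable_snd.add (hf.comp measurable_fst)) (ae_of_all _ fun x ↦ map_add_right_eq_self ν (f x))

end Shear

lemma dampedPlusKernel_shear_eq {E : Type*} [NormedAddCommGroup E] [InnerProductSpace ℝ E]
    (α : ℂ) (ε : ℝ) (x : E × ℝ) (v : E) (s : ℝ) :
    ppow true (s + ‖v‖ ^ 2 - ‖v‖ ^ 2) (α - 1) * cexp (-(ε : ℂ) * (s + ‖v‖ ^ 2 : ℝ)) *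
        cexp (I * (((inner ℝ x.1 v : ℝ) : ℂ) + (x.2 : ℂ) * (s + ‖v‖ ^ 2 : ℝ))) =
      cexp (-((ε : ℂ) - I * x.2) * ‖v‖ ^ 2 + I * ((inner ℝ x.1 v : ℝ) : ℂ)) *
        (ppow true s (α - 1) * cexp (-(((ε : ℂ) - I * x.2) * s))) := by
  rw [add_sub_cancel_right, mul_assoc, ← exp_add, mul_left_comm, ← exp_add]
  congr 2
  push_cast
  ring

/-- Fourier computation for the "+" kernel with exponential damping:
(1/Γ(α)) ∫ (yₙ−|y'|²)₊^{α−1} e^{−ε yₙ} e^{i x·y} dy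
  = π^{(n−1)/2} (ε − i xₙ)^{−α−(n−1)/2} exp(−|x'|²/(4(ε − i xₙ))),
with the principal power branch (arg ∈ (−π/2, π/2) since Re(ε − i xₙ) = ε > 0). -/
theorem fourier_plus_kernel_damped (n : ℕ) (hn : 2 ≤ n)
    (α : ℂ) (hα : 0 < α.re) (ε : ℝ) (hε : 0 < ε) (x : Rn n) :
    Integrable (fun y : Rn n => ppow true (y.2 - ‖y.1‖ ^ 2) (α - 1) *
      Complex.exp (-(ε : ℂ) * y.2) *
      Complex.exp (Complex.I * (((inner ℝ x.1 y.1 : ℝ) : ℂ) + (x.2 : ℂ) * y.2))) ∧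
    (1 / Complex.Gamma α) *
        ∫ y : Rn n, ppow true (y.2 - ‖y.1‖ ^ 2) (α - 1) *
          Complex.exp (-(ε : ℂ) * y.2) *
          Complex.exp (Complex.I * (((inner ℝ x.1 y.1 : ℝ) : ℂ) + (x.2 : ℂ) * y.2))
      = (Real.pi : ℂ) ^ (((n : ℂ) - 1) / 2) *
          ((ε : ℂ) - Complex.I * x.2) ^ (-α - ((n : ℂ) - 1) / 2) *
          Complex.exp (-((‖x.1‖ ^ 2 : ℝ) : ℂ) / (4 * ((ε : ℂ) - Complex.I * x.2))) := by
  set K := fun y : Rn n ↦ ppow true (y.2 - ‖y.1‖ ^ 2) (α - 1) * cexp (-(ε : ℂ) * y.2) *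
    cexp (I * (((inner ℝ x.1 y.1 : ℝ) : ℂ) + (x.2 : ℂ) * y.2))
  set b : ℂ := (ε : ℂ) - I * x.2
  have hb : 0 < b.re := by simpa [b] using hε
  let e := MeasurableEquiv.prodAddFun (fun v : EuclideanSpace ℝ (Fin (n - 1)) ↦ ‖v‖ ^ 2)
    (by fun_prop)
  have he : MeasurePreserving e := by
    rw [Measure.volume_eq_prod]
    exact MeasurableEquiv.measurePreserving_prodAddFun _ _ _
  have hsplit : K ∘ e = fun p ↦ cexp (-b * ‖p.1‖ ^ 2 + I * ((inner ℝ x.1 p.1 : ℝ) : ℂ)) *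
      (ppow true p.2 (α - 1) * cexp (-(b * p.2))) :=
    funext fun p ↦ dampedPlusKernel_shear_eq α ε x p.1 p.2
  constructor
  · rw [← he.integrable_comp_emb e.measurableEmbedding, hsplit, Measure.volume_eq_prod]
    exact (GaussianFourier.integrable_cexp_neg_mul_sq_norm_add hb I x.1).mul_prod
      (integrable_ppow_true_mul_cexp_neg_mul hα hb)
  · have hK : ∫ y, K y = (∫ v : EuclideanSpace ℝ (Fin (n - 1)),
        cexp (-b * ‖v‖ ^ 2 + I * ((inner ℝ x.1 v : ℝ) : ℂ))) *
        ∫ t : ℝ, ppow true t (α - 1) * cexp (-(b * t)) := by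
      rw [← integral_prod_mul, ← Measure.volume_eq_prod]
      exact (he.integral_comp' K).symm.trans (congrArg (fun f ↦ ∫ p, f p) hsplit)
    rw [hK, GaussianFourier.integral_cexp_neg_mul_sq_norm_add_of_euclideanSpace hb,
      integral_ppow_true_mul_cexp_neg_mul hα hb]
    rw [Fintype.card_fin, Nat.cast_sub (by omega : 1 ≤ n), Nat.cast_one, I_sq,
      ← ofReal_div_cpow_mul_one_div_cpow Real.pi_pos.le (Or.inl hb)]
    field_simp [Gamma_ne_zero_of_re_pos hα]
    push_cast
    ring_nf
end
end

section
/- Let α ∈ ℂ with Re α > 0 and let f be a Schwartz function on ℝⁿ. Then for each choice of sign ± and every x ∈ ℝⁿ, (P_±^α f)(x) = (T_±^α (B₁ f))(2x', x_n − |x'|²); that is, P_±^α f = B₂ T_±^α B₁ f, where (B₂ F)(x) = F(2x', x_n − |x'|²). -/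
/-!
Substituting `y ↦ x - y` writes `P_±^α f (x)` as `∫ k(xₙ - yₙ - |x' - y'|²) f(y) dy`. Completing the
square, `xₙ - yₙ - |x' - y'|² = (xₙ - |x'|²) - (yₙ + |y'|² - ⟨2x', y'⟩)`, so the shear
`y ↦ (y', yₙ + |y'|² - ⟨2x', y'⟩)`, which preserves Lebesgue measure (Fubini and translation
invariance in `yₙ`), carries this integral to the one defining `T_±^α (B₁ f)` at `(2x', xₙ - |x'|²)`.
-/

open MeasureTheory Complex

noncomputable section

/-- The operator (T_±^α g)(x) = (1/Γ(α)) ∫ (xₙ − yₙ)_±^{α−1} g(y', yₙ + x'·y') dy. -/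
def Tfrac (n : ℕ) (σ : Bool) (α : ℂ) (g : Rn n → ℂ) (x : Rn n) : ℂ :=
  (1 / Complex.Gamma α) *
    ∫ y : Rn n, ppow σ (x.2 - y.2) (α - 1) * g (y.1, y.2 + (inner ℝ x.1 y.1 : ℝ))

instance MeasureTheory.Measure.prod.instIsNegInvariant {G H : Type*} [MeasurableSpace G]
    [MeasurableSpace H] [AddGroup G] [AddGroup H] [MeasurableNeg G] [MeasurableNeg H]
    (μ : Measure G) (ν : Measure H) [SFinite μ] [SFinite ν] [μ.IsNegInvariant]
    [ν.IsNegInvariant] : (μ.prod ν).IsNegInvariant := by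
  constructor
  have h := Measure.map_prod_map μ ν (measurable_neg (G := G)) (measurable_neg (G := H))
  rw [Measure.map_neg_eq_self, Measure.map_neg_eq_self] at h
  exact h.symm

section Shear

variable {α G : Type*} [MeasurableSpace α] [MeasurableSpace G] [AddGroup G] [MeasurableAdd₂ G]
  [MeasurableNeg G]

def MeasurableEquiv.shear {c : α → G} (hc : Measurable c) : (α × G) ≃ᵐ (α × G) where
  toFun y := (y.1, y.2 + c y.1)
  invFun y := (y.1, y.2 - c y.1)
  left_inv y := by simp
  right_inv y := by simp
  measurable_toFun := by
    change Measurable fun y : α × G => (y.1, y.2 + c y.1)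
    fun_prop
  measurable_invFun := by
    change Measurable fun y : α × G => (y.1, y.2 - c y.1)
    fun_prop

theorem measurePreserving_shear (μ : Measure α) (ν : Measure G) [SFinite μ] [SFinite ν]
    [ν.IsAddRightInvariant] {c : α → G} (hc : Measurable c) :
    MeasurePreserving (MeasurableEquiv.shear hc) (μ.prod ν) (μ.prod ν) :=
  (MeasurePreserving.id μ).skew_product (g := fun a b => b + c a) (by fun_prop)
    (ae_of_all _ fun a => map_add_right_eq_self ν (c a))

theorem integral_comp_shear {F : Type*} [NormedAddCommGroup F] [NormedSpace ℝ F]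
    (μ : Measure α) (ν : Measure G) [SFinite μ] [SFinite ν] [ν.IsAddRightInvariant]
    {c : α → G} (hc : Measurable c) (g : α × G → F) :
    ∫ y, g (y.1, y.2 + c y.1) ∂μ.prod ν = ∫ y, g y ∂μ.prod ν :=
  (measurePreserving_shear μ ν hc).integral_comp' g

end Shear

section Parabolic

variable {E : Type*} [NormedAddCommGroup E] [InnerProductSpace ℝ E] [MeasurableSpace E]
  [BorelSpace E]

theorem integral_parabolic_convolution_eq_integral_shear (μ : Measure E) [SFinite μ]
    [μ.IsAddLeftInvariant] [μ.IsNegInvariant] (φ : ℝ → ℂ) (g : E × ℝ → ℂ) (x : E × ℝ) :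
    ∫ y, φ (y.2 - ‖y.1‖ ^ 2) * g (x - y) ∂μ.prod volume
      = ∫ z, φ (x.2 - ‖x.1‖ ^ 2 - z.2) * g (z.1, z.2 + inner ℝ ((2 : ℝ) • x.1) z.1 - ‖z.1‖ ^ 2)
          ∂μ.prod volume := by
  set c : E → ℝ := fun a => ‖a‖ ^ 2 - inner ℝ ((2 : ℝ) • x.1) a
  calc ∫ y, φ (y.2 - ‖y.1‖ ^ 2) * g (x - y) ∂μ.prod volume
      = ∫ y, φ (x.2 - y.2 - ‖x.1 - y.1‖ ^ 2) * g y ∂μ.prod volume := by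
        simpa using integral_sub_left_eq_self
          (fun y => φ (x.2 - y.2 - ‖x.1 - y.1‖ ^ 2) * g y) (μ.prod volume) x
    _ = ∫ y, φ (x.2 - ‖x.1‖ ^ 2 - (y.2 + c y.1))
          * g (y.1, y.2 + c y.1 + inner ℝ ((2 : ℝ) • x.1) y.1 - ‖y.1‖ ^ 2) ∂μ.prod volume := by
        congr! 4 with y
        · simp only [c, norm_sub_sq_real, real_inner_smul_left]
          ring
        · ext
          · rfl
          · simp only [c]
            ring
    _ = _ := integral_comp_shear μ volume (by fun_prop) (fun z => φ (x.2 - ‖x.1‖ ^ 2 - z.2)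
          * g (z.1, z.2 + inner ℝ ((2 : ℝ) • x.1) z.1 - ‖z.1‖ ^ 2))

end Parabolic

theorem parP_eq_B2_T_B1_general (n : ℕ) (σ : Bool)
    (α : ℂ) (f : SchwartzMap (Rn n) ℂ) (x : Rn n) :
    parP n σ α (fun y => f y) x
      = Tfrac n σ α (fun z => f (z.1, z.2 - ‖z.1‖ ^ 2)) ((2 : ℝ) • x.1, x.2 - ‖x.1‖ ^ 2) := by
  unfold parP Tfrac
  congr 1
  rw [Measure.volume_eq_prod]
  exact integral_parabolic_convolution_eq_integral_shear volume (ppow σ · (α - 1)) f x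

/-- P_±^α f = B₂ T_±^α B₁ f, where (B₁f)(x) = f(x', xₙ − |x'|²) and
(B₂F)(x) = F(2x', xₙ − |x'|²). -/
theorem parP_eq_B2_T_B1 (n : ℕ) (hn : 2 ≤ n) (σ : Bool)
    (α : ℂ) (hα : 0 < α.re) (f : SchwartzMap (Rn n) ℂ) (x : Rn n) :
    parP n σ α (fun y => f y) x
      = Tfrac n σ α (fun z => f (z.1, z.2 - ‖z.1‖ ^ 2)) ((2 : ℝ) • x.1, x.2 - ‖x.1‖ ^ 2) :=
  parP_eq_B2_T_B1_general n σ α f x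
end
end

section
/- Let α ∈ ℂ with Re α > 0, let λ₁ > 0 and λ₂ > 0, and let f be a Schwartz function on ℝⁿ. Define (A_λ f)(x) = f(λ₁ x', λ₂ x_n) and (B_λ F)(x) = λ₁^{1−n} exp(−α log λ₂) F((λ₂/λ₁) x', λ₂ x_n). Then for each choice of sign ± and every x ∈ ℝⁿ, (T_±^α (A_λ f))(x) = (B_λ (T_±^α f))(x). -/
open MeasureTheory Complex

noncomputable section

/-!
Substitute `y = (l₁ u', l₂ uₙ)` in the integral defining the right-hand side. The Jacobian
`l₁ⁿ⁻¹ l₂`, the homogeneity `(l₂ t)_±^{α-1} = l₂^{α-1} t_±^{α-1}` of the kernel and the prefactor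
`l₁^{1-n} l₂^{-α}` cancel, and the shear is preserved since `⟪(l₂/l₁) x', l₁ u'⟫ = l₂ ⟪x', u'⟫`.
-/

section ChangeOfVariables

variable {E F G : Type*} [NormedAddCommGroup E] [NormedSpace ℝ E] [FiniteDimensional ℝ E]
  [MeasurableSpace E] [BorelSpace E] [NormedAddCommGroup F] [NormedSpace ℝ F]
  [FiniteDimensional ℝ F] [MeasurableSpace F] [BorelSpace F]
  [NormedAddCommGroup G] [NormedSpace ℝ G]
  (μ : Measure E) [μ.IsAddHaarMeasure] (ν : Measure F) [ν.IsAddHaarMeasure]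

theorem integral_comp_smul_prodMap (g : E × F → G) {a b : ℝ} (ha : a ≠ 0) (hb : b ≠ 0) :
    ∫ u, g (a • u.1, b • u.2) ∂(μ.prod ν)
      = (|(a ^ Module.finrank ℝ E)⁻¹| * |(b ^ Module.finrank ℝ F)⁻¹|) • ∫ y, g y ∂(μ.prod ν) := by
  let e : E × F ≃ᵐ E × F :=
    ((Homeomorph.smulOfNeZero a ha).prodCongr (Homeomorph.smulOfNeZero b hb)).toMeasurableEquiv
  have hmap : (μ.prod ν).map e = (ENNReal.ofReal |(a ^ Module.finrank ℝ E)⁻¹| *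
      ENNReal.ofReal |(b ^ Module.finrank ℝ F)⁻¹|) • μ.prod ν := by
    rw [show ⇑e = Prod.map (a • ·) (b • ·) from rfl,
      ← Measure.map_prod_map μ ν (measurable_const_smul a) (measurable_const_smul b),
      Measure.map_addHaar_smul μ ha, Measure.map_addHaar_smul ν hb, Measure.prod_smul_left,
      Measure.prod_smul_right, smul_smul]
  change ∫ u, g (e u) ∂(μ.prod ν) = _
  rw [← integral_map_equiv e g, hmap, integral_smul_measure, ENNReal.toReal_mul,
    ENNReal.toReal_ofReal (abs_nonneg _), ENNReal.toReal_ofReal (abs_nonneg _)]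

end ChangeOfVariables

theorem ppow_mul_left (σ : Bool) {c : ℝ} (hc : 0 < c) (t : ℝ) (l : ℂ) :
    ppow σ (c * t) l = Complex.exp (l * Real.log c) * ppow σ t l := by
  cases σ
  · simp only [ppow, Bool.false_eq_true, if_false, mul_neg_iff, hc, hc.not_gt, true_and,
      false_and, or_false]
    split_ifs with ht
    · rw [← Complex.exp_add, ← mul_add, neg_mul_eq_mul_neg, Real.log_mul hc.ne' (by linarith)]
      push_cast
      ring_nf
    · rw [mul_zero]
  · simp only [ppow, if_true, mul_pos_iff_of_pos_left hc]
    split_ifs with ht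
    · rw [← Complex.exp_add, ← mul_add, Real.log_mul hc.ne' ht.ne']
      push_cast
      ring_nf
    · rw [mul_zero]

theorem Tfrac_scaling_general (n : ℕ) (hn : 2 ≤ n) (σ : Bool)
    (α : ℂ) (l₁ l₂ : ℝ) (h1 : 0 < l₁) (h2 : 0 < l₂)
    (f : SchwartzMap (Rn n) ℂ) (x : Rn n) :
    Tfrac n σ α (fun z => f (l₁ • z.1, l₂ * z.2)) x
      = ((l₁ ^ ((1 : ℝ) - n) : ℝ) : ℂ) * Complex.exp (-α * Real.log l₂) *
          Tfrac n σ α (fun y => f y) ((l₂ / l₁) • x.1, l₂ * x.2) := by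
  have hcov := integral_comp_smul_prodMap volume volume
    (fun y : Rn n => ppow σ (l₂ * x.2 - y.2) (α - 1) *
      f (y.1, y.2 + inner ℝ ((l₂ / l₁) • x.1) y.1)) h1.ne' h2.ne'
  have hintegrand (u : Rn n) :
      ppow σ (l₂ * x.2 - l₂ • u.2) (α - 1) *
          f (l₁ • u.1, l₂ • u.2 + inner ℝ ((l₂ / l₁) • x.1) (l₁ • u.1))
        = Complex.exp ((α - 1) * Real.log l₂) *
          (ppow σ (x.2 - u.2) (α - 1) * f (l₁ • u.1, l₂ * (u.2 + inner ℝ x.1 u.1))) := by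
    rw [smul_eq_mul, ← mul_sub, ppow_mul_left σ h2, real_inner_smul_left, real_inner_smul_right,
      ← mul_assoc, div_mul_cancel₀ _ h1.ne', mul_add]
    ring
  have hscale : ((l₁ ^ ((1 : ℝ) - n) : ℝ) : ℂ) = |(l₁ ^ (n - 1))⁻¹| := by
    rw [abs_of_pos (by positivity), ← Real.rpow_natCast, ← Real.rpow_neg h1.le,
      Nat.cast_sub (by omega), Nat.cast_one, neg_sub]
  have hweight : Complex.exp (-α * Real.log l₂) * Complex.exp ((α - 1) * Real.log l₂)
      = |(l₂ ^ 1)⁻¹| := by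
    rw [← Complex.exp_add, abs_of_pos (by positivity), pow_one, ← Real.exp_log h2,
      ← Real.exp_neg, Real.log_exp]
    push_cast
    ring_nf
  simp only [hintegrand, integral_const_mul, finrank_euclideanSpace_fin, Module.finrank_self,
    real_smul, Complex.ofReal_mul, ← hscale, ← hweight] at hcov
  simp only [Tfrac]
  rw [← mul_right_inj' (Complex.exp_ne_zero ((α - 1) * Real.log l₂))]
  linear_combination (Complex.Gamma α)⁻¹ * hcov

/-- Scaling identity: T_±^α (A_λ f) = B_λ (T_±^α f), where (A_λ f)(x) = f(λ₁x', λ₂xₙ)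
and (B_λ F)(x) = λ₁^{1−n} λ₂^{−α} F((λ₂/λ₁)x', λ₂xₙ). -/
theorem Tfrac_scaling (n : ℕ) (hn : 2 ≤ n) (σ : Bool)
    (α : ℂ) (hα : 0 < α.re) (l₁ l₂ : ℝ) (h1 : 0 < l₁) (h2 : 0 < l₂)
    (f : SchwartzMap (Rn n) ℂ) (x : Rn n) :
    Tfrac n σ α (fun z => f (l₁ • z.1, l₂ * z.2)) x
      = ((l₁ ^ ((1 : ℝ) - n) : ℝ) : ℂ) * Complex.exp (-α * Real.log l₂) *
          Tfrac n σ α (fun y => f y) ((l₂ / l₁) • x.1, l₂ * x.2) :=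
  Tfrac_scaling_general n hn σ α l₁ l₂ h1 h2 f x
end
end
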